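/- Suppose u^{n−1} ∈ ℝ^d satisfies u^{n−1} ≤ 0 componentwise (resp. u^{n−1} ≥ 𝟙 componentwise), and g : ℝ → ℝ has support contained in [0,1] with g(0)=g(1)=0. Then the splitting-method update ũ^n = (I + τψ_ε)⁻¹ ((M + τA)⁻¹ M (u^{n−1} + g(u^{n−1}) ΔW)) satisfies ũ^n ≤ 0 (resp. ũ^n ≥ 𝟙) componentwise, for any real ΔW. -/
import Mathlib

noncomputable def res (ε τ r : ℝ) : ℝ :=
  if r < 0 then ε * r / (ε + τ) else if r ≤ 1 then r else (ε * r + τ) / (ε + τ)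

private lemma maxp {d : ℕ} {m : Fin d → ℝ} (hm : ∀ K, 0 < m K)
    {τ : ℝ} (hτ : 0 < τ) {A : Matrix (Fin d) (Fin d) ℝ}
    (hoff : ∀ K L : Fin d, K ≠ L → A K L ≤ 0)
    (hrow : ∀ K : Fin d, ∑ L : Fin d, A K L = 0)
    {w : Fin d → ℝ} (hw : ∀ K, (Matrix.diagonal m + τ • A).mulVec w K ≤ 0) :
    ∀ K, w K ≤ 0 := by
  intro K
  obtain ⟨K0, -, hK0⟩ := Finset.exists_max_image Finset.univ w ⟨K, Finset.mem_univ K⟩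
  have hK0' : ∀ L, w L ≤ w K0 := fun L => hK0 L (Finset.mem_univ L)
  have expand : (Matrix.diagonal m + τ • A).mulVec w K0
      = m K0 * w K0 + τ * ∑ L, A K0 L * w L := by
    simp only [Matrix.mulVec, dotProduct, Matrix.add_apply, Matrix.smul_apply,
      smul_eq_mul, add_mul, Finset.sum_add_distrib, Finset.mul_sum, mul_assoc]
    congr 1
    rw [Finset.sum_eq_single K0]
    · simp [Matrix.diagonal_apply]
    · intro b _ hb; simp [Matrix.diagonal_apply, hb.symm]
    · simp
  have hsum : (0:ℝ) ≤ ∑ L, A K0 L * w L := by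
    have h1 : ∑ L, A K0 L * w K0 ≤ ∑ L, A K0 L * w L := by
      apply Finset.sum_le_sum
      intro L _
      rcases eq_or_ne L K0 with h | h
      · subst h; exact le_rfl
      · exact mul_le_mul_of_nonpos_left (hK0' L) (hoff K0 L (Ne.symm h))
    calc (0:ℝ) = (∑ L, A K0 L) * w K0 := by rw [hrow K0]; ring
    _ = ∑ L, A K0 L * w K0 := by rw [Finset.sum_mul]
    _ ≤ _ := h1
  have : m K0 * w K0 ≤ 0 := by
    have := hw K0
    rw [expand] at this
    nlinarith
  have hw0 : w K0 ≤ 0 := by nlinarith [hm K0]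
  exact le_trans (hK0' K) hw0

theorem stmt8 (d : ℕ) (m : Fin d → ℝ) (hm : ∀ K, 0 < m K)
    (τ ε : ℝ) (hτ : 0 < τ) (hε : 0 < ε)
    (A : Matrix (Fin d) (Fin d) ℝ)
    (hsymm : A.IsSymm)
    (hoff : ∀ K L : Fin d, K ≠ L → A K L ≤ 0)
    (hrow : ∀ K : Fin d, ∑ L : Fin d, A K L = 0)
    (g : ℝ → ℝ) (hg : ∀ v : ℝ, v ≤ 0 ∨ 1 ≤ v → g v = 0)
    (ΔW : ℝ) (u : Fin d → ℝ)
    (unew : Fin d → ℝ)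
    (hupdate : unew = fun K => res ε τ
      ((((Matrix.diagonal m + τ • A)⁻¹ * Matrix.diagonal m).mulVec
        (fun L => u L + g (u L) * ΔW)) K)) :
    ((∀ K, u K ≤ 0) → ∀ K, unew K ≤ 0) ∧
      ((∀ K, 1 ≤ u K) → ∀ K, 1 ≤ unew K) := by
  set N := Matrix.diagonal m + τ • A with hN
  have hετ : (0:ℝ) < ε + τ := by linarith
  -- invertibility of N
  have hdet : IsUnit N.det := by
    rw [isUnit_iff_ne_zero]
    intro hd
    obtain ⟨v, hv0, hv⟩ := Matrix.exists_mulVec_eq_zero_iff.mpr hd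
    have h1 : ∀ K, v K ≤ 0 := maxp hm hτ hoff hrow (fun K => by rw [hv]; simp)
    have h2 : ∀ K, (-v) K ≤ 0 := maxp hm hτ hoff hrow (fun K => by
      rw [Matrix.mulVec_neg, hv]; simp)
    apply hv0
    funext K
    have ha := h1 K
    have hb : -(v K) ≤ 0 := h2 K
    have : v K = 0 := le_antisymm ha (by linarith)
    simpa using this
  have hNinv : N * N⁻¹ = 1 := Matrix.mul_nonsing_inv N hdet
  -- res lemmas
  have res_nonpos : ∀ r : ℝ, r ≤ 0 → res ε τ r ≤ 0 := by
    intro r hr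
    unfold res
    rcases lt_or_eq_of_le hr with h | h
    · rw [if_pos h]
      apply div_nonpos_of_nonpos_of_nonneg
      · nlinarith
      · linarith
    · subst h; norm_num
  have res_ge_one : ∀ r : ℝ, 1 ≤ r → 1 ≤ res ε τ r := by
    intro r hr
    unfold res
    rw [if_neg (by linarith)]
    split_ifs with h
    · linarith
    · rw [le_div_iff₀ hετ]; nlinarith
  -- key: in both cases g (u L) = 0
  constructor
  · intro hu K
    have hgu : (fun L => u L + g (u L) * ΔW) = u := by
      funext L; rw [hg (u L) (Or.inl (hu L))]; ring
    set w := (N⁻¹ * Matrix.diagonal m).mulVec u with hw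
    have hNw : N.mulVec w = (Matrix.diagonal m).mulVec u := by
      rw [hw, Matrix.mulVec_mulVec, ← Matrix.mul_assoc, hNinv, Matrix.one_mul]
    have hwle : ∀ K, w K ≤ 0 := by
      apply maxp hm hτ hoff hrow
      intro K
      rw [hNw, Matrix.mulVec_diagonal]
      exact mul_nonpos_of_nonneg_of_nonpos (hm K).le (hu K)
    rw [hupdate]
    simp only [hgu]
    exact res_nonpos _ (hwle K)
  · intro hu K
    have hgu : (fun L => u L + g (u L) * ΔW) = u := by
      funext L; rw [hg (u L) (Or.inr (hu L))]; ring
    set w := (N⁻¹ * Matrix.diagonal m).mulVec u with hw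
    have hNw : N.mulVec w = (Matrix.diagonal m).mulVec u := by
      rw [hw, Matrix.mulVec_mulVec, ← Matrix.mul_assoc, hNinv, Matrix.one_mul]
    -- show 1 - w ≤ 0, i.e. N.mulVec (1 - w) ≤ 0
    have hN1 : ∀ K, N.mulVec (fun _ => (1:ℝ)) K = m K := by
      intro K
      simp only [hN, Matrix.mulVec, dotProduct, Matrix.add_apply, Matrix.smul_apply,
        smul_eq_mul, mul_one, Finset.sum_add_distrib, ← Finset.mul_sum, hrow K, mul_zero,
        add_zero]
      rw [Finset.sum_eq_single K]
      · simp [Matrix.diagonal_apply]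
      · intro b _ hb; simp [Matrix.diagonal_apply, hb.symm]
      · simp
    have hwge : ∀ K, (fun L => 1 - w L) K ≤ 0 := by
      apply maxp hm hτ hoff hrow
      intro K
      have : (fun L => (1:ℝ) - w L) = (fun _ => (1:ℝ)) - w := by funext L; simp
      rw [this, Matrix.mulVec_sub, Pi.sub_apply, hNw, hN1, Matrix.mulVec_diagonal]
      nlinarith [hm K, hu K]
    rw [hupdate]
    simp only [hgu]
    have h : 1 - w K ≤ 0 := hwge K
    exact res_ge_one _ (by linarith)
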